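/- Let ψ : ℝ → EuclideanSpace ℝ (Fin n) be continuous, ρ > 0, t_c > 0, δ > 0, and suppose the matrix (∫₀^{t_c} vecMulVec (ψ(s)) (ψ(s)) ds) − δ • 1 is positive semidefinite. If Φ : ℝ → Matrix (Fin n) (Fin n) ℝ is differentiable with Φ'(t) = −ρ • Φ(t) + vecMulVec (ψ(t)) (ψ(t)) for all t ≥ 0 and Φ(0) = 0, then det (Φ(t_c)) ≥ (δ * Real.exp(−ρ t_c))^n > 0. In particular, the scalar signal Δ := det ∘ Φ is interval exciting: there exists t with Δ(t) > 0. -/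

import Mathlib

/-!
Multiplying `Φ' = -ρ Φ + ψψᵀ` by `e^{ρt}` gives `(e^{ρt} Φ)' = e^{ρt} ψψᵀ`, so
`Φ(t_c) = e^{-ρ t_c} ∫₀^{t_c} e^{ρs} ψψᵀ ds ⪰ e^{-ρ t_c} ∫₀^{t_c} ψψᵀ ds ⪰ δ e^{-ρ t_c} I`
in the Loewner order, because `e^{ρs} ≥ 1` and `ψψᵀ ⪰ 0`. Hence every eigenvalue of `Φ(t_c)` is
at least `δ e^{-ρ t_c}`, and the determinant is their product.
-/

open Matrix
open scoped RealInnerProductSpace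

attribute [local instance] Matrix.normedAddCommGroup Matrix.normedSpace

def ev {n : ℕ} (x : EuclideanSpace ℝ (Fin n)) : Fin n → ℝ :=
  (WithLp.equiv 2 (Fin n → ℝ)) x

open scoped MatrixOrder
open Set

namespace Matrix

variable {n : Type*} [Fintype n]

theorem isClosed_setOf_posSemidef : IsClosed {A : Matrix n n ℝ | A.PosSemidef} := by
  simp_rw [posSemidef_iff_dotProduct_mulVec, ofPred_and, ofPred_forall]
  refine (isClosed_eq (by fun_prop) continuous_id).inter
    (isClosed_iInter fun x => isClosed_le continuous_const ?_)
  fun_prop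

-- The integrals are taken for the norm `Matrix.normedAddCommGroup`, whose topology agrees with the
-- product topology only after unfolding that definition, so instance search needs it stated so.
instance : @OrderClosedTopology (Matrix n n ℝ)
    Matrix.normedAddCommGroup.toUniformSpace.toTopologicalSpace _ where
  isClosed_le' := isClosed_setOf_posSemidef.preimage (continuous_snd.sub continuous_fst)

theorem pow_card_le_det_of_smul_one_le [DecidableEq n] {A : Matrix n n ℝ} {c : ℝ} (hc : 0 ≤ c)
    (h : c • 1 ≤ A) : c ^ Fintype.card n ≤ A.det := by
  have hA : A.IsHermitian := by
    simpa using (le_iff.mp h).isHermitian.add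
      ((isHermitian_one : (1 : Matrix n n ℝ).IsHermitian).smul (IsSelfAdjoint.all c))
  have hc_le : ∀ i, c ≤ hA.eigenvalues i := fun i =>
    (algebraMap_le_iff_le_spectrum hA.isSelfAdjoint).mp
      (by rwa [Algebra.algebraMap_eq_smul_one]) _ (hA.eigenvalues_mem_spectrum_real i)
  calc c ^ Fintype.card n = ∏ _i, c := by simp
    _ ≤ ∏ i, hA.eigenvalues i := Finset.prod_le_prod (fun _ _ => hc) fun i _ => hc_le i
    _ = A.det := by simp [hA.det_eq_prod_eigenvalues]

end Matrix

theorem intervalIntegral.integral_mono_on_of_le {E : Type*} [NormedAddCommGroup E]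
    [NormedSpace ℝ E] [PartialOrder E] [IsOrderedAddMonoid E] [IsOrderedModule ℝ E]
    [ClosedIciTopology E] {f g : ℝ → E} {a b : ℝ} (hab : a ≤ b)
    (hf : IntervalIntegrable f MeasureTheory.volume a b)
    (hg : IntervalIntegrable g MeasureTheory.volume a b) (h : ∀ x ∈ Icc a b, f x ≤ g x) :
    ∫ x in a..b, f x ≤ ∫ x in a..b, g x := by
  rw [intervalIntegral.integral_of_le hab, intervalIntegral.integral_of_le hab]
  exact MeasureTheory.setIntegral_mono_on hf.1 hg.1 measurableSet_Ioc
    fun x hx => h x (Ioc_subset_Icc_self hx)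

theorem eq_exp_smul_integral_of_hasDerivAt {E : Type*} [NormedAddCommGroup E] [NormedSpace ℝ E]
    [CompleteSpace E] {Φ g : ℝ → E} {ρ T : ℝ}
    (hΦ : ∀ t ∈ uIcc 0 T, HasDerivAt Φ ((-ρ) • Φ t + g t) t)
    (hg : IntervalIntegrable g MeasureTheory.volume 0 T) :
    Φ T = Real.exp (-ρ * T) • (Φ 0 + ∫ s in 0..T, Real.exp (ρ * s) • g s) := by
  have hderiv : ∀ t ∈ uIcc 0 T,
      HasDerivAt (fun t => Real.exp (ρ * t) • Φ t) (Real.exp (ρ * t) • g t) t := by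
    intro t ht
    have hexp : HasDerivAt (fun t => Real.exp (ρ * t)) (Real.exp (ρ * t) * ρ) t :=
      ((hasDerivAt_id t).const_mul ρ).exp.congr_deriv (by simp)
    refine (hexp.smul (hΦ t ht)).congr_deriv ?_
    module
  rw [intervalIntegral.integral_eq_sub_of_hasDerivAt hderiv
    (hg.continuousOn_smul (by fun_prop))]
  simp [smul_smul, ← Real.exp_add]

/-- Interval excitation of the vector regressor `ψ` implies interval
excitation of the decoupled scalar regressor `Δ = det Φ`:
`det Φ(t_c) ≥ (δ e^{−ρ t_c})ⁿ > 0`. -/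
theorem stmt18 {n : ℕ} (ψ : ℝ → EuclideanSpace ℝ (Fin n)) (hψ : Continuous ψ)
    (ρ tc δ : ℝ) (hρ : 0 < ρ) (htc : 0 < tc) (hδ : 0 < δ)
    (hIE : ((∫ s in (0:ℝ)..tc, vecMulVec (ev (ψ s)) (ev (ψ s))) -
      δ • (1 : Matrix (Fin n) (Fin n) ℝ)).PosSemidef)
    (Φ : ℝ → Matrix (Fin n) (Fin n) ℝ) (hΦ : Differentiable ℝ Φ)
    (hΦd : ∀ t ≥ (0:ℝ), deriv Φ t = (-ρ) • Φ t + vecMulVec (ev (ψ t)) (ev (ψ t)))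
    (hΦ0 : Φ 0 = 0) :
    (δ * Real.exp (-ρ * tc)) ^ n ≤ (Φ tc).det ∧
    (0:ℝ) < (δ * Real.exp (-ρ * tc)) ^ n ∧
    ∃ t : ℝ, 0 < (Φ t).det := by
  set M : ℝ → Matrix (Fin n) (Fin n) ℝ := fun s => vecMulVec (ev (ψ s)) (ev (ψ s))
  have hM : Continuous M := by
    unfold M ev
    fun_prop
  have hM_nonneg : ∀ s, 0 ≤ M s := fun s => by
    simpa using (posSemidef_vecMulVec_self_star (ev (ψ s))).nonneg
  have hΦtc : Φ tc = Real.exp (-ρ * tc) • ∫ s in 0..tc, Real.exp (ρ * s) • M s := by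
    have h := eq_exp_smul_integral_of_hasDerivAt
      (fun t ht => hΦd t (uIcc_of_le htc.le ▸ ht).1 ▸ (hΦ t).hasDerivAt)
      (hM.intervalIntegrable 0 tc)
    rwa [hΦ0, zero_add] at h
  have hM_le : ∫ s in 0..tc, M s ≤ ∫ s in 0..tc, Real.exp (ρ * s) • M s :=
    intervalIntegral.integral_mono_on_of_le htc.le (hM.intervalIntegrable 0 tc)
      ((by fun_prop : Continuous fun s => Real.exp (ρ * s) • M s).intervalIntegrable 0 tc)
      fun s hs => le_smul_of_one_le_left (hM_nonneg s) (Real.one_le_exp (mul_nonneg hρ.le hs.1))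
  have hΦ_ge : (δ * Real.exp (-ρ * tc)) • (1 : Matrix (Fin n) (Fin n) ℝ) ≤ Φ tc :=
    calc (δ * Real.exp (-ρ * tc)) • (1 : Matrix (Fin n) (Fin n) ℝ)
        = Real.exp (-ρ * tc) • δ • 1 := by rw [smul_smul, mul_comm]
      _ ≤ Real.exp (-ρ * tc) • ∫ s in 0..tc, M s :=
        smul_le_smul_of_nonneg_left hIE (Real.exp_pos _).le
      _ ≤ Φ tc := hΦtc ▸ smul_le_smul_of_nonneg_left hM_le (Real.exp_pos _).le
  have hpos : 0 < (δ * Real.exp (-ρ * tc)) ^ n := by positivity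
  have hdet : (δ * Real.exp (-ρ * tc)) ^ n ≤ (Φ tc).det := by
    simpa using pow_card_le_det_of_smul_one_le (by positivity) hΦ_ge
  exact ⟨hdet, hpos, tc, hpos.trans_le hdet⟩
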